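/- arXiv:1907.11391 — 2 statements merged into one kernel-verified Lean document; each statement's English description precedes it below -/
import Mathlib

section
/- Let X be a real random variable with mean μ and variance σ², and let M ≥ 0 satisfy P(X - μ ≥ M) ≤ ε/2 for some ε ∈ (0,1). Then E[(X - μ - M)·1_{X - μ ≥ M}] ≤ σ√(8ε). -/
/-! Since `M ≥ 0`, the integral is at most `∫_A |X - μ|` over `A = {X - μ ≥ M}`, and Cauchy–Schwarz
bounds this by `σ √P(A) ≤ σ √(ε / 2)`. -/

open MeasureTheory ProbabilityTheory

theorem integral_abs_le_sqrt_integral_sq_mul_sqrt_measureReal {α : Type*} [MeasurableSpace α]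
    {μ : Measure α} [IsFiniteMeasure μ] {f : α → ℝ} (hf : MemLp f 2 μ) :
    ∫ x, |f x| ∂μ ≤ √(∫ x, f x ^ 2 ∂μ) * √(μ.real Set.univ) := by
  have h := integral_mul_norm_le_Lp_mul_Lq (μ := μ) (g := fun _ ↦ (1 : ℝ)) .two_two
    (by simpa using hf) (by simpa using memLp_const (1 : ℝ))
  simp only [Real.norm_eq_abs, norm_one, mul_one, sq_abs, one_pow, integral_const,
    smul_eq_mul, Real.rpow_two] at h
  rwa [Real.sqrt_eq_rpow, Real.sqrt_eq_rpow]

theorem stmt1_general {Ω : Type*} [MeasurableSpace Ω] (P : Measure Ω) [IsProbabilityMeasure P]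
    (X : Ω → ℝ) (hX : MemLp X 2 P) (μ σ ε M : ℝ)
    (hμ : μ = ∫ ω, X ω ∂P)
    (hσ : σ ^ 2 = variance X P) (hσ0 : 0 ≤ σ)
    (hM0 : 0 ≤ M)
    (hM : (P {ω | M ≤ X ω - μ}).toReal ≤ ε / 2) :
    ∫ ω in {ω | M ≤ X ω - μ}, (X ω - μ - M) ∂P ≤ σ * Real.sqrt (8 * ε) := by
  set A := {ω | M ≤ X ω - μ}
  have hXμ : MemLp (fun ω ↦ X ω - μ) 2 P := hX.sub (memLp_const μ)
  have hvar : ∫ ω, (X ω - μ) ^ 2 ∂P = σ ^ 2 := by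
    rw [hσ, variance_eq_integral hX.aemeasurable, hμ]
  have hε : 0 ≤ ε := by linarith [ENNReal.toReal_nonneg (a := P A)]
  calc ∫ ω in A, (X ω - μ - M) ∂P
      ≤ ∫ ω in A, |X ω - μ| ∂P :=
        integral_mono ((hXμ.integrable one_le_two).restrict.sub (integrable_const M))
          (hXμ.integrable one_le_two).restrict.abs fun ω ↦ by
            linarith [le_abs_self (X ω - μ)]
    _ ≤ √(∫ ω in A, (X ω - μ) ^ 2 ∂P) * √(P.real A) := by
        simpa using integral_abs_le_sqrt_integral_sq_mul_sqrt_measureReal (hXμ.restrict A)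
    _ ≤ √(σ ^ 2) * √(8 * ε) := by
        gcongr
        · exact hvar ▸ setIntegral_le_integral hXμ.integrable_sq (.of_forall fun _ ↦ sq_nonneg _)
        · exact hM.trans (by linarith)
    _ = σ * √(8 * ε) := by rw [Real.sqrt_sq hσ0]

theorem stmt1 {Ω : Type*} [MeasurableSpace Ω] (P : Measure Ω) [IsProbabilityMeasure P]
    (X : Ω → ℝ) (hX : MemLp X 2 P) (μ σ ε M : ℝ)
    (hμ : μ = ∫ ω, X ω ∂P)
    (hσ : σ ^ 2 = variance X P) (hσ0 : 0 ≤ σ)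
    (hε : ε ∈ Set.Ioo (0 : ℝ) 1) (hM0 : 0 ≤ M)
    (hM : (P {ω | M ≤ X ω - μ}).toReal ≤ ε / 2) :
    ∫ ω in {ω | M ≤ X ω - μ}, (X ω - μ - M) ∂P ≤ σ * Real.sqrt (8 * ε) :=
  stmt1_general P X hX μ σ ε M hμ hσ hσ0 hM0 hM
end

section
/- Let X be a real random variable with mean μ and variance σ², and let M satisfy P(X - μ ≥ M) ≤ ε/2 with |M| ≤ σ√(2/ε). Then E[|X - μ|·1_{X - μ ≥ M}] ≤ σ√(ε/2) + σ√(2ε) ≤ σ√(8ε). In particular the quantity E(ε,X) := max(E[|X-μ|·1_{X-μ ≤ Q_{ε/2}}], E[|X-μ|·1_{X-μ ≥ Q_{1-ε/2}}]) satisfies E(ε,X) ≤ σ√(8ε), where Q_p denotes the p-quantile of X - μ. -/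
/-!
By Cauchy–Schwarz, `E[|X - μ| 1_A] ≤ σ √P(A)` for every event `A`. Each of the tail events in
the statement has probability at most `ε / 2`, so each tail integral is at most `σ √(ε/2)`, and
`√(ε/2) + √(2ε) = (3/2) √(2ε) ≤ 2 √(2ε) = √(8ε)`.
-/

open MeasureTheory ProbabilityTheory

lemma setIntegral_abs_le_sqrt_integral_sq_mul_sqrt {Ω : Type*} [MeasurableSpace Ω]
    {P : Measure Ω} [IsFiniteMeasure P] {Y : Ω → ℝ} (hY : MemLp Y 2 P) (A : Set Ω) :
    ∫ ω in A, |Y ω| ∂P ≤ √(∫ ω, Y ω ^ 2 ∂P) * √(P.real A) := by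
  have hYA : MemLp (fun ω ↦ |Y ω|) (ENNReal.ofReal 2) (P.restrict A) := by
    rw [ENNReal.ofReal_ofNat]
    exact (hY.restrict A).abs
  have hOneA : MemLp (fun _ ↦ (1 : ℝ)) (ENNReal.ofReal 2) (P.restrict A) := by
    simpa using memLp_const (μ := P.restrict A) (p := 2) (1 : ℝ)
  have holder := integral_mul_le_Lp_mul_Lq_of_nonneg Real.HolderConjugate.two_two
    (.of_forall fun ω ↦ abs_nonneg (Y ω)) (.of_forall fun _ ↦ zero_le_one) hYA hOneA
  simp only [mul_one, one_pow, Real.rpow_two, sq_abs, integral_const, smul_eq_mul,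
    measureReal_restrict_apply_univ, ← Real.sqrt_eq_rpow] at holder
  have hsq : ∫ ω in A, Y ω ^ 2 ∂P ≤ ∫ ω, Y ω ^ 2 ∂P :=
    setIntegral_le_integral hY.integrable_sq (.of_forall fun ω ↦ sq_nonneg (Y ω))
  exact holder.trans (mul_le_mul_of_nonneg_right (Real.sqrt_le_sqrt hsq) (Real.sqrt_nonneg _))

lemma setIntegral_abs_sub_integral_le {Ω : Type*} [MeasurableSpace Ω]
    {P : Measure Ω} [IsProbabilityMeasure P] {X : Ω → ℝ} (hX : MemLp X 2 P) (A : Set Ω) :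
    ∫ ω in A, |X ω - P[X]| ∂P ≤ √(Var[X; P]) * √(P.real A) := by
  rw [variance_eq_integral hX.aemeasurable]
  exact setIntegral_abs_le_sqrt_integral_sq_mul_sqrt (hX.sub (memLp_const _)) A

lemma Real.sqrt_div_two_add_sqrt_two_mul_le {ε : ℝ} (hε : 0 ≤ ε) :
    √(ε / 2) + √(2 * ε) ≤ √(8 * ε) := by
  have h8 : √(8 * ε) = 2 * √(2 * ε) := by
    rw [show 8 * ε = 2 ^ 2 * (2 * ε) by ring, Real.sqrt_mul (by positivity),
      Real.sqrt_sq zero_le_two]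
  have hhalf : √(ε / 2) ≤ √(2 * ε) := Real.sqrt_le_sqrt (by linarith)
  linarith

theorem stmt2_general {Ω : Type*} [MeasurableSpace Ω] (P : Measure Ω) [IsProbabilityMeasure P]
    (X : Ω → ℝ) (hX : MemLp X 2 P) (μ σ ε M Qa Qb : ℝ)
    (hμ : μ = ∫ ω, X ω ∂P)
    (hσ : σ ^ 2 = variance X P) (hσ0 : 0 ≤ σ)
    (hε : ε ∈ Set.Ioo (0 : ℝ) 1)
    (hM : (P {ω | M ≤ X ω - μ}).toReal ≤ ε / 2)
    -- Qa is the (ε/2)-quantile and Qb the (1-ε/2)-quantile of X - μ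
    -- (absolute continuity ensures the quantile events have exact probability ε/2)
    (hQa : (P {ω | X ω - μ ≤ Qa}).toReal = ε / 2)
    (hQb : (P {ω | Qb ≤ X ω - μ}).toReal = ε / 2) :
    (∫ ω in {ω | M ≤ X ω - μ}, |X ω - μ| ∂P ≤
        σ * Real.sqrt (ε / 2) + σ * Real.sqrt (2 * ε)) ∧
    σ * Real.sqrt (ε / 2) + σ * Real.sqrt (2 * ε) ≤ σ * Real.sqrt (8 * ε) ∧
    max (∫ ω in {ω | X ω - μ ≤ Qa}, |X ω - μ| ∂P)
        (∫ ω in {ω | Qb ≤ X ω - μ}, |X ω - μ| ∂P) ≤ σ * Real.sqrt (8 * ε) := by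
  have hσ_eq : σ = √(Var[X; P]) := by rw [← hσ, Real.sqrt_sq hσ0]
  have tail (A : Set Ω) (hA : P.real A ≤ ε / 2) : ∫ ω in A, |X ω - μ| ∂P ≤ σ * √(ε / 2) := by
    rw [hμ, hσ_eq]
    exact (setIntegral_abs_sub_integral_le hX A).trans
      (mul_le_mul_of_nonneg_left (Real.sqrt_le_sqrt hA) (Real.sqrt_nonneg _))
  have hsum : σ * √(ε / 2) + σ * √(2 * ε) ≤ σ * √(8 * ε) := by
    rw [← mul_add]
    exact mul_le_mul_of_nonneg_left (Real.sqrt_div_two_add_sqrt_two_mul_le hε.1.le) hσ0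
  have hhalf : σ * √(ε / 2) ≤ σ * √(ε / 2) + σ * √(2 * ε) :=
    le_add_of_nonneg_right (by positivity)
  exact ⟨(tail _ hM).trans hhalf, hsum,
    max_le ((tail _ hQa.le).trans (hhalf.trans hsum)) ((tail _ hQb.le).trans (hhalf.trans hsum))⟩

theorem stmt2 {Ω : Type*} [MeasurableSpace Ω] (P : Measure Ω) [IsProbabilityMeasure P]
    (X : Ω → ℝ) (hX : MemLp X 2 P) (μ σ ε M Qa Qb : ℝ)
    (hμ : μ = ∫ ω, X ω ∂P)
    (hσ : σ ^ 2 = variance X P) (hσ0 : 0 ≤ σ)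
    (hε : ε ∈ Set.Ioo (0 : ℝ) 1)
    (hM : (P {ω | M ≤ X ω - μ}).toReal ≤ ε / 2)
    (hMabs : |M| ≤ σ * Real.sqrt (2 / ε))
    -- Qa is the (ε/2)-quantile and Qb the (1-ε/2)-quantile of X - μ
    -- (absolute continuity ensures the quantile events have exact probability ε/2)
    (hQa : (P {ω | X ω - μ ≤ Qa}).toReal = ε / 2)
    (hQb : (P {ω | Qb ≤ X ω - μ}).toReal = ε / 2) :
    (∫ ω in {ω | M ≤ X ω - μ}, |X ω - μ| ∂P ≤
        σ * Real.sqrt (ε / 2) + σ * Real.sqrt (2 * ε)) ∧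
    σ * Real.sqrt (ε / 2) + σ * Real.sqrt (2 * ε) ≤ σ * Real.sqrt (8 * ε) ∧
    max (∫ ω in {ω | X ω - μ ≤ Qa}, |X ω - μ| ∂P)
        (∫ ω in {ω | Qb ≤ X ω - μ}, |X ω - μ| ∂P) ≤ σ * Real.sqrt (8 * ε) :=
  stmt2_general P X hX μ σ ε M Qa Qb hμ hσ hσ0 hε hM hQa hQb
end
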